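/- arXiv:2601.22287 — 5 statements merged into one kernel-verified Lean document; each statement's English description precedes it below -/
import Mathlib

section
/- Let (A, B, i) on spaces (D_v) and (A', B', i') on spaces (D'_v) be framed representation data with the same framing spaces (F_v), and assume (A, B, i) is stable. Suppose two families of linear maps π_v, π̃_v : D_v → D'_v both intertwine the data, i.e. π_{t(e)}∘A_e = A'_e∘π_{s(e)}, π_{s(e)}∘B_e = B'_e∘π_{t(e)} for all arrows e and π_v∘i_v = i'_v for all vertices v, and the same identities hold with π replaced by π̃. Then π_v = π̃_v for every vertex v. (This is the key step in the proof that the split parabolic quiver variety embeds into the product of the corresponding Nakajima quiver varieties.) -/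
open Module LinearMap

/-- Transport along an equality of vertices. -/
def dcast {V : Type*} (D : V → Type*) [∀ v, AddCommGroup (D v)] [∀ v, Module ℂ (D v)]
    {v w : V} (h : v = w) : D v →ₗ[ℂ] D w := by subst h; exact LinearMap.id

/-- Stability of framed representation data `(A, B, i)` of a quiver with source/target
maps `s t : E → V`, on spaces `D` with framing spaces `F`: the only subrepresentation
containing the image of the framing maps is everything. -/
def Stable {V E : Type*} (s t : E → V)
    (D : V → Type*) [∀ v, AddCommGroup (D v)] [∀ v, Module ℂ (D v)]
    (F : V → Type*) [∀ v, AddCommGroup (F v)] [∀ v, Module ℂ (F v)]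
    (A : ∀ e, D (s e) →ₗ[ℂ] D (t e))
    (B : ∀ e, D (t e) →ₗ[ℂ] D (s e))
    (i : ∀ v, F v →ₗ[ℂ] D v) : Prop :=
  ∀ S : ∀ v, Submodule ℂ (D v),
    (∀ e, ∀ x ∈ S (s e), A e x ∈ S (t e)) →
    (∀ e, ∀ x ∈ S (t e), B e x ∈ S (s e)) →
    (∀ v, ∀ f, i v f ∈ S v) →
    ∀ v, S v = ⊤

/-! The equalizer of two intertwiners is a subrepresentation containing the image of the
framing, so by stability it is everything. -/

theorem LinearMap.map_mem_eqLocus_of_comp_eq {R M N M' N' : Type*} [Semiring R]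
    [AddCommMonoid M] [AddCommMonoid N] [AddCommMonoid M'] [AddCommMonoid N']
    [Module R M] [Module R N] [Module R M'] [Module R N']
    {A : M →ₗ[R] N} {A' : M' →ₗ[R] N'} {f f' : M →ₗ[R] M'} {g g' : N →ₗ[R] N'}
    (h : g ∘ₗ A = A' ∘ₗ f) (h' : g' ∘ₗ A = A' ∘ₗ f') {x : M} (hx : x ∈ eqLocus f f') :
    A x ∈ eqLocus g g' := by
  rw [mem_eqLocus] at hx ⊢
  calc g (A x) = A' (f x) := LinearMap.congr_fun h x
    _ = A' (f' x) := by rw [hx]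
    _ = g' (A x) := (LinearMap.congr_fun h' x).symm

theorem intertwiner_unique_general
    {V E : Type*} (s t : E → V)
    (D D' F : V → Type*)
    [∀ v, AddCommGroup (D v)] [∀ v, Module ℂ (D v)]
    [∀ v, AddCommGroup (D' v)] [∀ v, Module ℂ (D' v)]
    [∀ v, AddCommGroup (F v)] [∀ v, Module ℂ (F v)]
    (A : ∀ e, D (s e) →ₗ[ℂ] D (t e)) (B : ∀ e, D (t e) →ₗ[ℂ] D (s e))
    (i : ∀ v, F v →ₗ[ℂ] D v)
    (A' : ∀ e, D' (s e) →ₗ[ℂ] D' (t e)) (B' : ∀ e, D' (t e) →ₗ[ℂ] D' (s e))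
    (i' : ∀ v, F v →ₗ[ℂ] D' v)
    (hstable : Stable s t D F A B i)
    (π π' : ∀ v, D v →ₗ[ℂ] D' v)
    (hA : ∀ e, π (t e) ∘ₗ A e = A' e ∘ₗ π (s e))
    (hB : ∀ e, π (s e) ∘ₗ B e = B' e ∘ₗ π (t e))
    (hi : ∀ v, π v ∘ₗ i v = i' v)
    (hA' : ∀ e, π' (t e) ∘ₗ A e = A' e ∘ₗ π' (s e))
    (hB' : ∀ e, π' (s e) ∘ₗ B e = B' e ∘ₗ π' (t e))
    (hi' : ∀ v, π' v ∘ₗ i v = i' v) :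
    ∀ v, π v = π' v := by
  intro v
  refine LinearMap.eqLocus_eq_top.1 (hstable (fun v => eqLocus (π v) (π' v)) ?_ ?_ ?_ v)
  · exact fun e _ hx => map_mem_eqLocus_of_comp_eq (hA e) (hA' e) hx
  · exact fun e _ hx => map_mem_eqLocus_of_comp_eq (hB e) (hB' e) hx
  · exact fun v f => mem_eqLocus.2 <| by
      rw [← LinearMap.comp_apply, ← LinearMap.comp_apply, hi, hi']

/-- Two families of intertwiners out of a stable framed representation coincide. -/
theorem intertwiner_unique
    {V E : Type*} [Fintype V] [Fintype E] (s t : E → V)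
    (D D' F : V → Type*)
    [∀ v, AddCommGroup (D v)] [∀ v, Module ℂ (D v)] [∀ v, FiniteDimensional ℂ (D v)]
    [∀ v, AddCommGroup (D' v)] [∀ v, Module ℂ (D' v)] [∀ v, FiniteDimensional ℂ (D' v)]
    [∀ v, AddCommGroup (F v)] [∀ v, Module ℂ (F v)] [∀ v, FiniteDimensional ℂ (F v)]
    (A : ∀ e, D (s e) →ₗ[ℂ] D (t e)) (B : ∀ e, D (t e) →ₗ[ℂ] D (s e))
    (i : ∀ v, F v →ₗ[ℂ] D v)
    (A' : ∀ e, D' (s e) →ₗ[ℂ] D' (t e)) (B' : ∀ e, D' (t e) →ₗ[ℂ] D' (s e))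
    (i' : ∀ v, F v →ₗ[ℂ] D' v)
    (hstable : Stable s t D F A B i)
    (π π' : ∀ v, D v →ₗ[ℂ] D' v)
    (hA : ∀ e, π (t e) ∘ₗ A e = A' e ∘ₗ π (s e))
    (hB : ∀ e, π (s e) ∘ₗ B e = B' e ∘ₗ π (t e))
    (hi : ∀ v, π v ∘ₗ i v = i' v)
    (hA' : ∀ e, π' (t e) ∘ₗ A e = A' e ∘ₗ π' (s e))
    (hB' : ∀ e, π' (s e) ∘ₗ B e = B' e ∘ₗ π' (t e))
    (hi' : ∀ v, π' v ∘ₗ i v = i' v) :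
    ∀ v, π v = π' v :=
  intertwiner_unique_general s t D D' F A B i A' B' i' hstable π π' hA hB hi hA' hB' hi'
end

section
/- Fix, for each vertex v, a surjective linear map π_v : D_v → D̂_v between finite-dimensional ℂ-vector spaces with kernel K_v, and fix linear maps X̂_e : D̂_{s(e)} → D_{t(e)}, Ŷ_e : D̂_{t(e)} → D_{s(e)} for each arrow e, and a_v : F_v → D_v for each vertex v, such that the data (X̂_e∘π_{s(e)}, Ŷ_e∘π_{t(e)}, a_v) is stable. Let ξ_v : D_v → D_v be linear maps with ξ_v(K_v) ⊆ K_v for every v, and let ξ̂_v : D̂_v → D̂_v denote the induced maps (so π_v∘ξ_v = ξ̂_v∘π_v). If ξ_{t(e)}∘X̂_e = X̂_e∘ξ̂_{s(e)} and ξ_{s(e)}∘Ŷ_e = Ŷ_e∘ξ̂_{t(e)} for every arrow e, and ξ_v∘a_v = 0 for every vertex v, then ξ_v = 0 for every vertex v. (This is the injectivity of the map ȷ in the statement that the split parabolic quiver variety is smooth.) -/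
open Module LinearMap

section Intertwining

variable {R M N P M' N' : Type*} [Semiring R]
  [AddCommMonoid M] [Module R M] [AddCommMonoid N] [Module R N] [AddCommMonoid P] [Module R P]
  [AddCommMonoid M'] [Module R M'] [AddCommMonoid N'] [Module R N']

theorem map_mem_ker_of_comp_eq {f : M →ₗ[R] M'} {f' : N →ₗ[R] N'} {g : M →ₗ[R] N}
    {g' : M' →ₗ[R] N'} (h : f' ∘ₗ g = g' ∘ₗ f) {x : M} (hx : x ∈ ker f) : g x ∈ ker f' := by
  rw [mem_ker, ← comp_apply, h, comp_apply, mem_ker.mp hx, map_zero]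

theorem comp_comm_of_comm {ξ : M →ₗ[R] M} {η : N →ₗ[R] N} {ζ : P →ₗ[R] P}
    {f : M →ₗ[R] N} {g : N →ₗ[R] P} (hf : f ∘ₗ ξ = η ∘ₗ f) (hg : ζ ∘ₗ g = g ∘ₗ η) :
    ζ ∘ₗ (g ∘ₗ f) = (g ∘ₗ f) ∘ₗ ξ := by
  rw [← comp_assoc, hg, comp_assoc, ← hf, comp_assoc]

end Intertwining

theorem Stable.eq_zero_of_comp_eq {V E : Type*} {s t : E → V}
    {D F G : V → Type*} [∀ v, AddCommGroup (D v)] [∀ v, Module ℂ (D v)]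
    [∀ v, AddCommGroup (F v)] [∀ v, Module ℂ (F v)]
    [∀ v, AddCommGroup (G v)] [∀ v, Module ℂ (G v)]
    {A : ∀ e, D (s e) →ₗ[ℂ] D (t e)} {B : ∀ e, D (t e) →ₗ[ℂ] D (s e)} {i : ∀ v, F v →ₗ[ℂ] D v}
    (hstable : Stable s t D F A B i)
    {A' : ∀ e, G (s e) →ₗ[ℂ] G (t e)} {B' : ∀ e, G (t e) →ₗ[ℂ] G (s e)}
    {φ : ∀ v, D v →ₗ[ℂ] G v}
    (hA : ∀ e, φ (t e) ∘ₗ A e = A' e ∘ₗ φ (s e))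
    (hB : ∀ e, φ (s e) ∘ₗ B e = B' e ∘ₗ φ (t e))
    (hi : ∀ v, φ v ∘ₗ i v = 0) (v : V) : φ v = 0 := by
  have hker : ker (φ v) = ⊤ :=
    hstable (fun v => ker (φ v))
      (fun e _ hx => map_mem_ker_of_comp_eq (hA e) hx)
      (fun e _ hx => map_mem_ker_of_comp_eq (hB e) hx)
      (fun v f => by rw [mem_ker, ← comp_apply, hi v]; rfl)
      v
  exact ker_eq_top.mp hker

theorem xi_eq_zero_general
    {V E : Type*} (s t : E → V)
    (D Dh F : V → Type*)
    [∀ v, AddCommGroup (D v)] [∀ v, Module ℂ (D v)]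
    [∀ v, AddCommGroup (Dh v)] [∀ v, Module ℂ (Dh v)]
    [∀ v, AddCommGroup (F v)] [∀ v, Module ℂ (F v)]
    (π : ∀ v, D v →ₗ[ℂ] Dh v)
    (Xh : ∀ e, Dh (s e) →ₗ[ℂ] D (t e)) (Yh : ∀ e, Dh (t e) →ₗ[ℂ] D (s e))
    (a : ∀ v, F v →ₗ[ℂ] D v)
    (hstable : Stable s t D F (fun e => Xh e ∘ₗ π (s e)) (fun e => Yh e ∘ₗ π (t e)) a)
    (ξ : ∀ v, D v →ₗ[ℂ] D v) (ξh : ∀ v, Dh v →ₗ[ℂ] Dh v)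
    (hcomm : ∀ v, π v ∘ₗ ξ v = ξh v ∘ₗ π v)
    (hX : ∀ e, ξ (t e) ∘ₗ Xh e = Xh e ∘ₗ ξh (s e))
    (hY : ∀ e, ξ (s e) ∘ₗ Yh e = Yh e ∘ₗ ξh (t e))
    (ha : ∀ v, ξ v ∘ₗ a v = 0) :
    ∀ v, ξ v = 0 :=
  hstable.eq_zero_of_comp_eq (fun e => comp_comm_of_comm (hcomm (s e)) (hX e))
    (fun e => comp_comm_of_comm (hcomm (t e)) (hY e)) ha

/-- Injectivity of the map `ȷ`: an infinitesimal parabolic symmetry `ξ` preserving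
the kernels of `π`, intertwining the data and killing the framing maps, vanishes. -/
theorem xi_eq_zero
    {V E : Type*} [Fintype V] [Fintype E] (s t : E → V)
    (D Dh F : V → Type*)
    [∀ v, AddCommGroup (D v)] [∀ v, Module ℂ (D v)] [∀ v, FiniteDimensional ℂ (D v)]
    [∀ v, AddCommGroup (Dh v)] [∀ v, Module ℂ (Dh v)] [∀ v, FiniteDimensional ℂ (Dh v)]
    [∀ v, AddCommGroup (F v)] [∀ v, Module ℂ (F v)] [∀ v, FiniteDimensional ℂ (F v)]
    (π : ∀ v, D v →ₗ[ℂ] Dh v) (hπ : ∀ v, Function.Surjective (π v))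
    (Xh : ∀ e, Dh (s e) →ₗ[ℂ] D (t e)) (Yh : ∀ e, Dh (t e) →ₗ[ℂ] D (s e))
    (a : ∀ v, F v →ₗ[ℂ] D v)
    (hstable : Stable s t D F (fun e => Xh e ∘ₗ π (s e)) (fun e => Yh e ∘ₗ π (t e)) a)
    (ξ : ∀ v, D v →ₗ[ℂ] D v) (ξh : ∀ v, Dh v →ₗ[ℂ] Dh v)
    (hcomm : ∀ v, π v ∘ₗ ξ v = ξh v ∘ₗ π v)
    (hX : ∀ e, ξ (t e) ∘ₗ Xh e = Xh e ∘ₗ ξh (s e))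
    (hY : ∀ e, ξ (s e) ∘ₗ Yh e = Yh e ∘ₗ ξh (t e))
    (ha : ∀ v, ξ v ∘ₗ a v = 0) :
    ∀ v, ξ v = 0 :=
  xi_eq_zero_general s t D Dh F π Xh Yh a hstable ξ ξh hcomm hX hY ha
end

section
/- Fix, for each vertex v, a surjective linear map π_v : D_v → D̂_v between finite-dimensional ℂ-vector spaces, and fix linear maps X̂_e : D̂_{s(e)} → D_{t(e)}, Ŷ_e : D̂_{t(e)} → D_{s(e)} for each arrow e, and a_v : F_v → D_v, b̂_v : D̂_v → F_v for each vertex v, such that the data (X̂_e∘π_{s(e)}, Ŷ_e∘π_{t(e)}, a_v) is stable. Suppose linear maps C_v : D_v → D̂_v satisfy: π_{s(e)}∘Ŷ_e∘C_{t(e)} = C_{s(e)}∘Ŷ_e∘π_{t(e)} and C_{t(e)}∘X̂_e∘π_{s(e)} = π_{t(e)}∘X̂_e∘C_{s(e)} for every arrow e, and b̂_v∘C_v = 0 and C_v∘a_v = 0 for every vertex v. Then C_v = 0 for every vertex v. (This is the vanishing of the orthogonal complement of the image of the differential of the moment map, the key step in the proof that the split parabolic quiver variety is smooth.) -/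
open Module LinearMap

/-- The kernels of `C` form a subrepresentation containing the image of the framing. -/
theorem Stable.eq_zero_of_comp_eq_zero {V E : Type*} {s t : E → V}
    {D : V → Type*} [∀ v, AddCommGroup (D v)] [∀ v, Module ℂ (D v)]
    {F : V → Type*} [∀ v, AddCommGroup (F v)] [∀ v, Module ℂ (F v)]
    {W : V → Type*} [∀ v, AddCommGroup (W v)] [∀ v, Module ℂ (W v)]
    {A : ∀ e, D (s e) →ₗ[ℂ] D (t e)} {B : ∀ e, D (t e) →ₗ[ℂ] D (s e)} {i : ∀ v, F v →ₗ[ℂ] D v}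
    (hs : Stable s t D F A B i)
    (C : ∀ v, D v →ₗ[ℂ] W v) (A' : ∀ e, W (s e) →ₗ[ℂ] W (t e)) (B' : ∀ e, W (t e) →ₗ[ℂ] W (s e))
    (hA : ∀ e, C (t e) ∘ₗ A e = A' e ∘ₗ C (s e)) (hB : ∀ e, C (s e) ∘ₗ B e = B' e ∘ₗ C (t e))
    (hi : ∀ v, C v ∘ₗ i v = 0) (v : V) : C v = 0 := by
  refine ker_eq_top.mp (hs (fun v => ker (C v)) (fun e x hx => ?_) (fun e x hx => ?_)
    (fun v f => ?_) v)
  · rw [mem_ker, ← comp_apply, hA, comp_apply, mem_ker.mp hx, map_zero]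
  · rw [mem_ker, ← comp_apply, hB, comp_apply, mem_ker.mp hx, map_zero]
  · rw [mem_ker, ← comp_apply, hi, LinearMap.zero_apply]

theorem C_eq_zero_general
    {V E : Type*} (s t : E → V)
    (D Dh F : V → Type*)
    [∀ v, AddCommGroup (D v)] [∀ v, Module ℂ (D v)]
    [∀ v, AddCommGroup (Dh v)] [∀ v, Module ℂ (Dh v)]
    [∀ v, AddCommGroup (F v)] [∀ v, Module ℂ (F v)]
    (π : ∀ v, D v →ₗ[ℂ] Dh v)
    (Xh : ∀ e, Dh (s e) →ₗ[ℂ] D (t e)) (Yh : ∀ e, Dh (t e) →ₗ[ℂ] D (s e))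
    (a : ∀ v, F v →ₗ[ℂ] D v)
    (hstable : Stable s t D F (fun e => Xh e ∘ₗ π (s e)) (fun e => Yh e ∘ₗ π (t e)) a)
    (C : ∀ v, D v →ₗ[ℂ] Dh v)
    (hY : ∀ e, π (s e) ∘ₗ Yh e ∘ₗ C (t e) = C (s e) ∘ₗ Yh e ∘ₗ π (t e))
    (hX : ∀ e, C (t e) ∘ₗ Xh e ∘ₗ π (s e) = π (t e) ∘ₗ Xh e ∘ₗ C (s e))
    (ha : ∀ v, C v ∘ₗ a v = 0) :
    ∀ v, C v = 0 :=
  hstable.eq_zero_of_comp_eq_zero C (fun e => π (t e) ∘ₗ Xh e) (fun e => π (s e) ∘ₗ Yh e)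
    hX (fun e => (hY e).symm) ha

/-- Vanishing of the orthogonal complement of the image of `dμ`. -/
theorem C_eq_zero
    {V E : Type*} [Fintype V] [Fintype E] (s t : E → V)
    (D Dh F : V → Type*)
    [∀ v, AddCommGroup (D v)] [∀ v, Module ℂ (D v)] [∀ v, FiniteDimensional ℂ (D v)]
    [∀ v, AddCommGroup (Dh v)] [∀ v, Module ℂ (Dh v)] [∀ v, FiniteDimensional ℂ (Dh v)]
    [∀ v, AddCommGroup (F v)] [∀ v, Module ℂ (F v)] [∀ v, FiniteDimensional ℂ (F v)]
    (π : ∀ v, D v →ₗ[ℂ] Dh v) (hπ : ∀ v, Function.Surjective (π v))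
    (Xh : ∀ e, Dh (s e) →ₗ[ℂ] D (t e)) (Yh : ∀ e, Dh (t e) →ₗ[ℂ] D (s e))
    (a : ∀ v, F v →ₗ[ℂ] D v) (bh : ∀ v, Dh v →ₗ[ℂ] F v)
    (hstable : Stable s t D F (fun e => Xh e ∘ₗ π (s e)) (fun e => Yh e ∘ₗ π (t e)) a)
    (C : ∀ v, D v →ₗ[ℂ] Dh v)
    (hY : ∀ e, π (s e) ∘ₗ Yh e ∘ₗ C (t e) = C (s e) ∘ₗ Yh e ∘ₗ π (t e))
    (hX : ∀ e, C (t e) ∘ₗ Xh e ∘ₗ π (s e) = π (t e) ∘ₗ Xh e ∘ₗ C (s e))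
    (hb : ∀ v, bh v ∘ₗ C v = 0)
    (ha : ∀ v, C v ∘ₗ a v = 0) :
    ∀ v, C v = 0 :=
  C_eq_zero_general s t D Dh F π Xh Yh a hstable C hY hX ha
end

section
/- Fix, for each vertex v, a surjective linear map π_v : D_v → D̂_v between finite-dimensional ℂ-vector spaces, and fix linear maps X̂_e : D̂_{s(e)} → D_{t(e)}, Ŷ_e : D̂_{t(e)} → D_{s(e)} for each arrow e, and a_v : F_v → D_v, b̂_v : D̂_v → F_v for each vertex v, such that the data (X̂_e∘π_{s(e)}, Ŷ_e∘π_{t(e)}, a_v) is stable. Then the linear map dμ from the direct sum ⊕_{e∈E}(Hom(D̂_{s(e)}, D_{t(e)}) ⊕ Hom(D̂_{t(e)}, D_{s(e)})) ⊕ ⊕_{v∈V}(Hom(F_v, D_v) ⊕ Hom(D̂_v, F_v)) to ⊕_{v∈V} Hom(D̂_v, D_v), whose component at a vertex v applied to a tuple (Â, B̂, i, ĵ) equals ∑_{e : t(e)=v}(Â_e∘π_{s(e)}∘Ŷ_e + X̂_e∘π_{s(e)}∘B̂_e) − ∑_{e : s(e)=v}(Ŷ_e∘π_{t(e)}∘Â_e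 + B̂_e∘π_{t(e)}∘X̂_e) + i_v∘b̂_v + a_v∘ĵ_v, is surjective. (This is the surjectivity of dμ in the statement that the split parabolic quiver variety is smooth.) -/
/-!
Surjectivity of `dμ` is dual to the statement that a functional `φ` on `⊕ᵥ Hom(D̂ᵥ, Dᵥ)` which
kills the image of `dμ` vanishes. Writing `φ = ∑ᵥ tr (ξᵥ ∘ -)`, testing against `dμ` in the
directions `Â`, `B̂` and `ĵ` shows that the subspaces `ker ξᵥ` are preserved by `X̂ π` and `Ŷ π`
and contain the image of `a`; stability then forces `ker ξᵥ = Dᵥ`, i.e. `φ = 0`. Only `ker ξᵥ`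
is needed, and it is read off from `φ` directly: `x ∈ ker ξᵥ` iff `φ (λ ⊗ x) = 0` for every
functional `λ`; as rank-one maps span `Hom(D̂ᵥ, Dᵥ)`, `ker ξᵥ = Dᵥ` forces `φ = 0` on that summand.
-/

open Module LinearMap

theorem LinearMap.ext_on_smulRight {R N M P : Type*} [CommRing R]
    [AddCommGroup N] [Module R N] [Module.Finite R N] [Module.Projective R N]
    [AddCommGroup M] [Module R M] [AddCommGroup P] [Module R P]
    {f g : (N →ₗ[R] M) →ₗ[R] P}
    (h : ∀ (l : Dual R N) (x : M), f (l.smulRight x) = g (l.smulRight x)) : f = g :=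
  (LinearEquiv.eq_comp_toLinearMap_iff (e₁₂ := dualTensorHomEquiv R N M) f g).mp
    (TensorProduct.ext' h)

section TraceKer

variable {R N M : Type*} [CommRing R] [AddCommGroup N] [Module R N] [AddCommGroup M] [Module R M]

/-- Under the trace pairing `φ = tr (ξ ∘ -)` this is `ker ξ`. -/
def traceKer (φ : Dual R (N →ₗ[R] M)) : Submodule R M :=
  ker (smulRightₗ.compr₂ φ).flip

theorem mem_traceKer {φ : Dual R (N →ₗ[R] M)} {x : M} :
    x ∈ traceKer φ ↔ ∀ l : Dual R N, φ (l.smulRight x) = 0 := by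
  simp [traceKer, LinearMap.ext_iff]

theorem eq_zero_of_traceKer_eq_top [Module.Finite R N] [Module.Projective R N]
    {φ : Dual R (N →ₗ[R] M)} (h : traceKer φ = ⊤) : φ = 0 :=
  ext_on_smulRight fun l _ => mem_traceKer.mp (h ▸ Submodule.mem_top) l

theorem apply_mem_traceKer {F : Type*} [AddCommGroup F] [Module R F]
    {φ : Dual R (N →ₗ[R] M)} {a : F →ₗ[R] M} (h : ∀ j : N →ₗ[R] F, φ (a ∘ₗ j) = 0) (y : F) :
    a y ∈ traceKer φ :=
  mem_traceKer.mpr fun l => by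
    rw [← h (l.smulRight y)]
    congr 1
    ext; simp

theorem map_mem_traceKer {N' M' : Type*} [AddCommGroup N'] [Module R N'] [AddCommGroup M']
    [Module R M'] {φ : Dual R (N →ₗ[R] M)} {ψ : Dual R (N' →ₗ[R] M')} {p : N →ₗ[R] N'}
    {q : M →ₗ[R] M'} (h : ∀ f : N' →ₗ[R] M, φ (f ∘ₗ p) = ψ (q ∘ₗ f)) {x : M}
    (hx : x ∈ traceKer φ) : q x ∈ traceKer ψ :=
  mem_traceKer.mpr fun l => by
    have hq : l.smulRight (q x) = q ∘ₗ l.smulRight x := by ext; simp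
    have hp : l.smulRight x ∘ₗ p = (l ∘ₗ p).smulRight x := by ext; simp
    rw [hq, ← h, hp, mem_traceKer.mp hx]

end TraceKer

section Quiver

variable {V E : Type*} [Fintype E] [DecidableEq V] (s t : E → V) (D Dh F : V → Type*)
  [∀ v, AddCommGroup (D v)] [∀ v, Module ℂ (D v)]
  [∀ v, AddCommGroup (Dh v)] [∀ v, Module ℂ (Dh v)]
  [∀ v, AddCommGroup (F v)] [∀ v, Module ℂ (F v)]
  (π : ∀ v, D v →ₗ[ℂ] Dh v)
  (Xh : ∀ e, Dh (s e) →ₗ[ℂ] D (t e)) (Yh : ∀ e, Dh (t e) →ₗ[ℂ] D (s e))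
  (a : ∀ v, F v →ₗ[ℂ] D v) (bh : ∀ v, Dh v →ₗ[ℂ] F v)

theorem dite_dcast_eq_single {w v : V} (g : Dh w →ₗ[ℂ] D w) :
    (if h : w = v then dcast D h ∘ₗ g ∘ₗ dcast Dh h.symm else 0)
      = Pi.single (M := fun v => Dh v →ₗ[ℂ] D v) w g v := by
  by_cases h : w = v
  · subst h
    simp [dcast]
  · simp [h]

abbrev ParamSpace :=
  (∀ e, Dh (s e) →ₗ[ℂ] D (t e)) × (∀ e, Dh (t e) →ₗ[ℂ] D (s e)) ×
    (∀ v, F v →ₗ[ℂ] D v) × (∀ v, Dh v →ₗ[ℂ] F v)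

def dmu : ParamSpace s t D Dh F →ₗ[ℂ] (∀ v, Dh v →ₗ[ℂ] D v) where
  toFun p := ∑ e, Pi.single (t e) (p.1 e ∘ₗ π (s e) ∘ₗ Yh e + Xh e ∘ₗ π (s e) ∘ₗ p.2.1 e)
    - ∑ e, Pi.single (s e) (Yh e ∘ₗ π (t e) ∘ₗ p.1 e + p.2.1 e ∘ₗ π (t e) ∘ₗ Xh e)
    + fun v => p.2.2.1 v ∘ₗ bh v + a v ∘ₗ p.2.2.2 v
  map_add' p q := by
    simp only [Prod.fst_add, Prod.snd_add, Pi.add_apply, add_comp, comp_add, Pi.single_add,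
      Finset.sum_add_distrib]
    funext v
    simp only [Pi.add_apply, Pi.sub_apply]
    abel
  map_smul' c p := by
    simp only [Prod.smul_fst, Prod.smul_snd, Pi.smul_apply, smul_comp, comp_smul, ← smul_add,
      Pi.single_smul, ← Finset.smul_sum, RingHom.id_apply]
    funext v
    simp only [Pi.add_apply, Pi.sub_apply, Pi.smul_apply, smul_add, smul_sub]

variable {s t D Dh F π Xh Yh a bh}

theorem dmu_apply (Ah : ∀ e, Dh (s e) →ₗ[ℂ] D (t e)) (Bh : ∀ e, Dh (t e) →ₗ[ℂ] D (s e))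
    (i : ∀ v, F v →ₗ[ℂ] D v) (jh : ∀ v, Dh v →ₗ[ℂ] F v) (v : V) :
    dmu s t D Dh F π Xh Yh a bh (Ah, Bh, i, jh) v =
      (∑ e : E, if h : t e = v then
          dcast D h ∘ₗ (Ah e ∘ₗ π (s e) ∘ₗ Yh e + Xh e ∘ₗ π (s e) ∘ₗ Bh e)
            ∘ₗ dcast Dh h.symm else 0)
      - (∑ e : E, if h : s e = v then
          dcast D h ∘ₗ (Yh e ∘ₗ π (t e) ∘ₗ Ah e + Bh e ∘ₗ π (t e) ∘ₗ Xh e)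
            ∘ₗ dcast Dh h.symm else 0)
      + i v ∘ₗ bh v + a v ∘ₗ jh v := by
  simp [dmu, dite_dcast_eq_single, add_assoc]

theorem dmu_single_fst [DecidableEq E] (e : E) (f : Dh (s e) →ₗ[ℂ] D (t e)) :
    dmu s t D Dh F π Xh Yh a bh (Pi.single e f, 0, 0, 0) =
      Pi.single (t e) (f ∘ₗ π (s e) ∘ₗ Yh e) - Pi.single (s e) (Yh e ∘ₗ π (t e) ∘ₗ f) := by
  simp only [dmu, LinearMap.coe_mk, AddHom.coe_mk]
  rw [Finset.sum_eq_single e (fun x _ hx => by simp [hx]) (by simp),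
    Finset.sum_eq_single e (fun x _ hx => by simp [hx]) (by simp)]
  ext1 v
  simp

theorem dmu_single_snd [DecidableEq E] (e : E) (g : Dh (t e) →ₗ[ℂ] D (s e)) :
    dmu s t D Dh F π Xh Yh a bh (0, Pi.single e g, 0, 0) =
      Pi.single (t e) (Xh e ∘ₗ π (s e) ∘ₗ g) - Pi.single (s e) (g ∘ₗ π (t e) ∘ₗ Xh e) := by
  simp only [dmu, LinearMap.coe_mk, AddHom.coe_mk]
  rw [Finset.sum_eq_single e (fun x _ hx => by simp [hx]) (by simp),
    Finset.sum_eq_single e (fun x _ hx => by simp [hx]) (by simp)]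
  ext1 v
  simp

theorem dmu_single_jh (v : V) (j : Dh v →ₗ[ℂ] F v) :
    dmu s t D Dh F π Xh Yh a bh (0, 0, 0, Pi.single v j) = Pi.single v (a v ∘ₗ j) := by
  simp only [dmu, LinearMap.coe_mk, AddHom.coe_mk]
  funext w
  simpa using Pi.apply_single (fun w => (a w).comp) (fun _ => comp_zero _) v j w

theorem eq_zero_of_comp_dmu_eq_zero [Fintype V] [∀ v, FiniteDimensional ℂ (Dh v)]
    (hstable : Stable s t D F (fun e => Xh e ∘ₗ π (s e)) (fun e => Yh e ∘ₗ π (t e)) a)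
    {φ : Dual ℂ (∀ v, Dh v →ₗ[ℂ] D v)} (hφ : φ ∘ₗ dmu s t D Dh F π Xh Yh a bh = 0) :
    φ = 0 := by
  classical
  let φv (v : V) : Dual ℂ (Dh v →ₗ[ℂ] D v) := φ ∘ₗ LinearMap.single ℂ (fun v => Dh v →ₗ[ℂ] D v) v
  have hφv (p : ParamSpace s t D Dh F) : φ (dmu s t D Dh F π Xh Yh a bh p) = 0 :=
    LinearMap.congr_fun hφ p
  have hA (e : E) (f : Dh (s e) →ₗ[ℂ] D (t e)) :
      φv (t e) (f ∘ₗ π (s e) ∘ₗ Yh e) = φv (s e) ((Yh e ∘ₗ π (t e)) ∘ₗ f) := by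
    have h := hφv (Pi.single e f, 0, 0, 0)
    rw [dmu_single_fst, map_sub] at h
    exact sub_eq_zero.mp h
  have hB (e : E) (g : Dh (t e) →ₗ[ℂ] D (s e)) :
      φv (s e) (g ∘ₗ π (t e) ∘ₗ Xh e) = φv (t e) ((Xh e ∘ₗ π (s e)) ∘ₗ g) := by
    have h := hφv (0, Pi.single e g, 0, 0)
    rw [dmu_single_snd, map_sub] at h
    exact (sub_eq_zero.mp h).symm
  have hJ (v : V) (j : Dh v →ₗ[ℂ] F v) : φv v (a v ∘ₗ j) = 0 := by
    simpa [dmu_single_jh, φv] using hφv (0, 0, 0, Pi.single v j)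
  have htop := hstable (fun v => traceKer (φv v))
    (fun e _ hx => map_mem_traceKer (hB e) hx) (fun e _ hx => map_mem_traceKer (hA e) hx)
    (fun v => apply_mem_traceKer (hJ v))
  exact pi_ext' fun v => eq_zero_of_traceKer_eq_top (htop v)

theorem surjective_dmu [Fintype V] [∀ v, FiniteDimensional ℂ (Dh v)]
    (hstable : Stable s t D F (fun e => Xh e ∘ₗ π (s e)) (fun e => Yh e ∘ₗ π (t e)) a) :
    Function.Surjective (dmu s t D Dh F π Xh Yh a bh) :=
  dualMap_injective_iff.mp <| (injective_iff_map_eq_zero _).mpr fun _ =>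
    eq_zero_of_comp_dmu_eq_zero hstable

end Quiver

theorem dmu_surjective_general
    {V E : Type*} [Fintype V] [Fintype E] [DecidableEq V] (s t : E → V)
    (D Dh F : V → Type*)
    [∀ v, AddCommGroup (D v)] [∀ v, Module ℂ (D v)]
    [∀ v, AddCommGroup (Dh v)] [∀ v, Module ℂ (Dh v)] [∀ v, FiniteDimensional ℂ (Dh v)]
    [∀ v, AddCommGroup (F v)] [∀ v, Module ℂ (F v)]
    (π : ∀ v, D v →ₗ[ℂ] Dh v)
    (Xh : ∀ e, Dh (s e) →ₗ[ℂ] D (t e)) (Yh : ∀ e, Dh (t e) →ₗ[ℂ] D (s e))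
    (a : ∀ v, F v →ₗ[ℂ] D v) (bh : ∀ v, Dh v →ₗ[ℂ] F v)
    (hstable : Stable s t D F (fun e => Xh e ∘ₗ π (s e)) (fun e => Yh e ∘ₗ π (t e)) a) :
    ∀ C : ∀ v, Dh v →ₗ[ℂ] D v,
      ∃ (Ah : ∀ e, Dh (s e) →ₗ[ℂ] D (t e)) (Bh : ∀ e, Dh (t e) →ₗ[ℂ] D (s e))
        (i : ∀ v, F v →ₗ[ℂ] D v) (jh : ∀ v, Dh v →ₗ[ℂ] F v),
        ∀ v,
          (∑ e : E, if h : t e = v then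
              dcast D h ∘ₗ (Ah e ∘ₗ π (s e) ∘ₗ Yh e + Xh e ∘ₗ π (s e) ∘ₗ Bh e)
                ∘ₗ dcast Dh h.symm else 0)
          - (∑ e : E, if h : s e = v then
              dcast D h ∘ₗ (Yh e ∘ₗ π (t e) ∘ₗ Ah e + Bh e ∘ₗ π (t e) ∘ₗ Xh e)
                ∘ₗ dcast Dh h.symm else 0)
          + i v ∘ₗ bh v + a v ∘ₗ jh v = C v := by
  intro C
  obtain ⟨⟨Ah, Bh, i, jh⟩, hC⟩ := surjective_dmu (bh := bh) hstable C
  exact ⟨Ah, Bh, i, jh, fun v => hC ▸ (dmu_apply Ah Bh i jh v).symm⟩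

/-- Surjectivity of the differential of the moment map on the split parabolic
representation space. -/
theorem dmu_surjective
    {V E : Type*} [Fintype V] [Fintype E] [DecidableEq V] (s t : E → V)
    (D Dh F : V → Type*)
    [∀ v, AddCommGroup (D v)] [∀ v, Module ℂ (D v)] [∀ v, FiniteDimensional ℂ (D v)]
    [∀ v, AddCommGroup (Dh v)] [∀ v, Module ℂ (Dh v)] [∀ v, FiniteDimensional ℂ (Dh v)]
    [∀ v, AddCommGroup (F v)] [∀ v, Module ℂ (F v)] [∀ v, FiniteDimensional ℂ (F v)]
    (π : ∀ v, D v →ₗ[ℂ] Dh v) (hπ : ∀ v, Function.Surjective (π v))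
    (Xh : ∀ e, Dh (s e) →ₗ[ℂ] D (t e)) (Yh : ∀ e, Dh (t e) →ₗ[ℂ] D (s e))
    (a : ∀ v, F v →ₗ[ℂ] D v) (bh : ∀ v, Dh v →ₗ[ℂ] F v)
    (hstable : Stable s t D F (fun e => Xh e ∘ₗ π (s e)) (fun e => Yh e ∘ₗ π (t e)) a) :
    ∀ C : ∀ v, Dh v →ₗ[ℂ] D v,
      ∃ (Ah : ∀ e, Dh (s e) →ₗ[ℂ] D (t e)) (Bh : ∀ e, Dh (t e) →ₗ[ℂ] D (s e))
        (i : ∀ v, F v →ₗ[ℂ] D v) (jh : ∀ v, Dh v →ₗ[ℂ] F v),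
        ∀ v,
          (∑ e : E, if h : t e = v then
              dcast D h ∘ₗ (Ah e ∘ₗ π (s e) ∘ₗ Yh e + Xh e ∘ₗ π (s e) ∘ₗ Bh e)
                ∘ₗ dcast Dh h.symm else 0)
          - (∑ e : E, if h : s e = v then
              dcast D h ∘ₗ (Yh e ∘ₗ π (t e) ∘ₗ Ah e + Bh e ∘ₗ π (t e) ∘ₗ Xh e)
                ∘ₗ dcast Dh h.symm else 0)
          + i v ∘ₗ bh v + a v ∘ₗ jh v = C v :=
  dmu_surjective_general s t D Dh F π Xh Yh a bh hstable
end

section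
/- Let (A, B, i) be framed representation data on spaces (D_v) and (Â, B̂, î) framed representation data on spaces (D̂_v), both with the same framing (F_v), and assume (Â, B̂, î) is stable. Suppose linear maps π_v : D_v → D̂_v satisfy π_{t(e)}∘A_e = Â_e∘π_{s(e)} and π_{s(e)}∘B_e = B̂_e∘π_{t(e)} for all arrows e and π_v∘i_v = î_v for all vertices v; suppose moreover that ker(π_{s(e)}) ⊆ ker(A_e) and ker(π_{t(e)}) ⊆ ker(B_e) for every arrow e, and that for every vertex v one has D_v = ∑_{e : t(e)=v} range(A_e) + ∑_{e : s(e)=v} range(B_e) + range(i_v). Then (A, B, i) is stable. (This is the key step in describing the image and fibers of the second projection from the split parabolic quiver variety.) -/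
open Module LinearMap

/-!
Let `S` be a subrepresentation of `(A, B, i)` containing the framing. Its image under `π` is a
subrepresentation of the stable data `(Â, B̂, î)` containing the framing, so `π` maps each `S_v`
onto `D̂_v`, i.e. `S_v + ker π_v = D_v`. As the arrow maps kill `ker π`, their ranges are the images
of `S`, hence lie in `S`; since these ranges and the framing span every `D_v`, `S` is everything.
-/

theorem Submodule.range_eq_map_of_ker_le {R M N P : Type*} [Ring R]
    [AddCommGroup M] [Module R M] [AddCommGroup N] [Module R N] [AddCommGroup P] [Module R P]
    {f : M →ₗ[R] N} {g : M →ₗ[R] P} {S : Submodule R M}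
    (hker : ker g ≤ ker f) (hS : S.map g = ⊤) : range f = S.map f := by
  have hsup : S ⊔ ker g = ⊤ := by rw [← Submodule.comap_map_eq, hS, Submodule.comap_top]
  have hkill : (ker g).map f = ⊥ := by
    rw [eq_bot_iff, Submodule.map_le_iff_le_comap]
    exact hker
  rw [← Submodule.map_top, ← hsup, Submodule.map_sup, hkill, sup_bot_eq]

theorem dcast_mem {V : Type*} {D : V → Type*} [∀ v, AddCommGroup (D v)] [∀ v, Module ℂ (D v)]
    {S : ∀ v, Submodule ℂ (D v)} {v w : V} (h : v = w) {x : D v} (hx : x ∈ S v) :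
    dcast D h x ∈ S w := by
  subst h
  exact hx

theorem Stable.map_eq_top {V E : Type*} {s t : E → V} {D Dh F : V → Type*}
    [∀ v, AddCommGroup (D v)] [∀ v, Module ℂ (D v)]
    [∀ v, AddCommGroup (Dh v)] [∀ v, Module ℂ (Dh v)]
    [∀ v, AddCommGroup (F v)] [∀ v, Module ℂ (F v)]
    {A : ∀ e, D (s e) →ₗ[ℂ] D (t e)} {B : ∀ e, D (t e) →ₗ[ℂ] D (s e)} {i : ∀ v, F v →ₗ[ℂ] D v}
    {Ah : ∀ e, Dh (s e) →ₗ[ℂ] Dh (t e)} {Bh : ∀ e, Dh (t e) →ₗ[ℂ] Dh (s e)}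
    {ih : ∀ v, F v →ₗ[ℂ] Dh v}
    (hstable : Stable s t Dh F Ah Bh ih) {π : ∀ v, D v →ₗ[ℂ] Dh v}
    (hA : ∀ e, π (t e) ∘ₗ A e = Ah e ∘ₗ π (s e))
    (hB : ∀ e, π (s e) ∘ₗ B e = Bh e ∘ₗ π (t e))
    (hi : ∀ v, π v ∘ₗ i v = ih v)
    {S : ∀ v, Submodule ℂ (D v)}
    (hSA : ∀ e, ∀ x ∈ S (s e), A e x ∈ S (t e))
    (hSB : ∀ e, ∀ x ∈ S (t e), B e x ∈ S (s e))
    (hSi : ∀ v, ∀ f, i v f ∈ S v) (v : V) :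
    (S v).map (π v) = ⊤ := by
  refine hstable (fun v ↦ (S v).map (π v)) ?_ ?_ ?_ v
  · rintro e _ ⟨x, hx, rfl⟩
    exact ⟨A e x, hSA e x hx, LinearMap.congr_fun (hA e) x⟩
  · rintro e _ ⟨x, hx, rfl⟩
    exact ⟨B e x, hSB e x hx, LinearMap.congr_fun (hB e) x⟩
  · intro v f
    exact ⟨i v f, hSi v f, LinearMap.congr_fun (hi v) f⟩

theorem stable_of_lift_general
    {V E : Type*} (s t : E → V)
    (D Dh F : V → Type*)
    [∀ v, AddCommGroup (D v)] [∀ v, Module ℂ (D v)]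
    [∀ v, AddCommGroup (Dh v)] [∀ v, Module ℂ (Dh v)]
    [∀ v, AddCommGroup (F v)] [∀ v, Module ℂ (F v)]
    (A : ∀ e, D (s e) →ₗ[ℂ] D (t e)) (B : ∀ e, D (t e) →ₗ[ℂ] D (s e))
    (i : ∀ v, F v →ₗ[ℂ] D v)
    (Ah : ∀ e, Dh (s e) →ₗ[ℂ] Dh (t e)) (Bh : ∀ e, Dh (t e) →ₗ[ℂ] Dh (s e))
    (ih : ∀ v, F v →ₗ[ℂ] Dh v)
    (hstable : Stable s t Dh F Ah Bh ih)
    (π : ∀ v, D v →ₗ[ℂ] Dh v)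
    (hA : ∀ e, π (t e) ∘ₗ A e = Ah e ∘ₗ π (s e))
    (hB : ∀ e, π (s e) ∘ₗ B e = Bh e ∘ₗ π (t e))
    (hi : ∀ v, π v ∘ₗ i v = ih v)
    (hkerA : ∀ e, ∀ x, π (s e) x = 0 → A e x = 0)
    (hkerB : ∀ e, ∀ x, π (t e) x = 0 → B e x = 0)
    (hspan : ∀ v, (⨆ e : {e : E // t e = v}, LinearMap.range (dcast D e.2 ∘ₗ A e.1)) ⊔
      (⨆ e : {e : E // s e = v}, LinearMap.range (dcast D e.2 ∘ₗ B e.1)) ⊔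
      LinearMap.range (i v) = ⊤) :
    Stable s t D F A B i := by
  intro S hSA hSB hSi
  have hmap := hstable.map_eq_top hA hB hi hSA hSB hSi
  have hrangeA (e : E) : range (A e) ≤ S (t e) := by
    rw [Submodule.range_eq_map_of_ker_le (fun x ↦ hkerA e x) (hmap (s e)),
      Submodule.map_le_iff_le_comap]
    exact hSA e
  have hrangeB (e : E) : range (B e) ≤ S (s e) := by
    rw [Submodule.range_eq_map_of_ker_le (fun x ↦ hkerB e x) (hmap (t e)),
      Submodule.map_le_iff_le_comap]
    exact hSB e
  intro v
  rw [eq_top_iff, ← hspan v]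
  refine sup_le (sup_le (iSup_le ?_) (iSup_le ?_)) ?_
  · rintro ⟨e, he⟩ _ ⟨x, rfl⟩
    exact dcast_mem he (hrangeA e ⟨x, rfl⟩)
  · rintro ⟨e, he⟩ _ ⟨x, rfl⟩
    exact dcast_mem he (hrangeB e ⟨x, rfl⟩)
  · rintro _ ⟨f, rfl⟩
    exact hSi v f

/-- If the data `(A, B, i)` maps onto stable data `(Â, B̂, î)`, the arrow maps kill
the kernels of `π`, and the incoming arrow maps together with the framing map span
each `D_v`, then `(A, B, i)` is itself stable. -/
theorem stable_of_lift
    {V E : Type*} [Fintype V] [Fintype E] (s t : E → V)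
    (D Dh F : V → Type*)
    [∀ v, AddCommGroup (D v)] [∀ v, Module ℂ (D v)] [∀ v, FiniteDimensional ℂ (D v)]
    [∀ v, AddCommGroup (Dh v)] [∀ v, Module ℂ (Dh v)] [∀ v, FiniteDimensional ℂ (Dh v)]
    [∀ v, AddCommGroup (F v)] [∀ v, Module ℂ (F v)] [∀ v, FiniteDimensional ℂ (F v)]
    (A : ∀ e, D (s e) →ₗ[ℂ] D (t e)) (B : ∀ e, D (t e) →ₗ[ℂ] D (s e))
    (i : ∀ v, F v →ₗ[ℂ] D v)
    (Ah : ∀ e, Dh (s e) →ₗ[ℂ] Dh (t e)) (Bh : ∀ e, Dh (t e) →ₗ[ℂ] Dh (s e))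
    (ih : ∀ v, F v →ₗ[ℂ] Dh v)
    (hstable : Stable s t Dh F Ah Bh ih)
    (π : ∀ v, D v →ₗ[ℂ] Dh v)
    (hA : ∀ e, π (t e) ∘ₗ A e = Ah e ∘ₗ π (s e))
    (hB : ∀ e, π (s e) ∘ₗ B e = Bh e ∘ₗ π (t e))
    (hi : ∀ v, π v ∘ₗ i v = ih v)
    (hkerA : ∀ e, ∀ x, π (s e) x = 0 → A e x = 0)
    (hkerB : ∀ e, ∀ x, π (t e) x = 0 → B e x = 0)
    (hspan : ∀ v, (⨆ e : {e : E // t e = v}, LinearMap.range (dcast D e.2 ∘ₗ A e.1)) ⊔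
      (⨆ e : {e : E // s e = v}, LinearMap.range (dcast D e.2 ∘ₗ B e.1)) ⊔
      LinearMap.range (i v) = ⊤) :
    Stable s t D F A B i :=
  stable_of_lift_general s t D Dh F A B i Ah Bh ih hstable π hA hB hi hkerA hkerB hspan
end
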